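/- Let Ω = {−1,1}^ℕ and let α>2. For every x∈Ω the series f(x) = x₁ Σ_{n=2}^∞ x_n/(n−1)^α converges absolutely; the function f:Ω→ℝ so defined is continuous and belongs to the Walters class W(Ω,σ), i.e. sup_{n≥1} sup_{w∈{−1,1}^n} |S_n(f)(wx) − S_n(f)(wy)| → 0 as d(x,y) → 0. -/

import Mathlib

/-!
If `z` and `z'` agree on their first `M + 1` coordinates, the Dyson potential varies by at most
`2 r_M`, where `r_M = ∑_{k ≥ M} (k+1)^{-α}` is a tail of its absolutely convergent series. In a
Birkhoff sum `S_n f(wx) - S_n f(wy)` with `x, y` agreeing on `N` coordinates, the `j`-th term sees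
agreement on `n - j + N` coordinates, so the whole difference is at most `2 ∑_{i ≥ N} r_i`.
Since `(k+M+1)^α ≥ (k+1)^{α/2} (M+1)^{α/2}`, we get `r_M ≤ C (M+1)^{-α/2}`, so for `α > 2` the
tails `r_M` are summable and the bound tends to `0` as `N → ∞`, uniformly in `n` and `w`.
-/

open Real MeasureTheory Filter Topology Set

open scoped Classical

namespace GS

/-- The full shift space `Ω = 𝒜^ℕ`. -/
abbrev Omega (𝒜 : Type) : Type := ℕ → 𝒜

variable {𝒜 : Type}

/-- The left shift `σ(x₁,x₂,…) = (x₂,x₃,…)`. -/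
def shift (x : Omega 𝒜) : Omega 𝒜 := fun n => x (n + 1)

/-- Prepending a symbol: `qx = (q,x₁,x₂,…)`. -/
def cons (q : 𝒜) (x : Omega 𝒜) : Omega 𝒜 := fun n => Nat.casesOn n q x

/-- Concatenation `wx` of a finite word `w ∈ 𝒜^k` with `x ∈ Ω`. -/
def concat {k : ℕ} (w : Fin k → 𝒜) (x : Omega 𝒜) : Omega 𝒜 :=
  fun n => if h : n < k then w ⟨n, h⟩ else x (n - k)

/-- The metric `d(x,y) = 2^{-N(x,y)}`, `N(x,y) = inf{k ≥ 1 : x_k ≠ y_k}`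
(sequences are indexed from `0` in Lean, whence the `+ 1`). -/
noncomputable def dOmega (x y : Omega 𝒜) : ℝ :=
  if x = y then 0 else (1 / 2 : ℝ) ^ (sInf {k : ℕ | x k ≠ y k} + 1)

/-- `a : Ω → E` is `α`-Hölder (w.r.t. `dOmega`):
`Hol_α(a) = sup_{x≠y} ‖a x - a y‖ / d(x,y)^α < ∞`. -/
def IsHolderW (α : ℝ) {E : Type*} [NormedAddCommGroup E] (a : Omega 𝒜 → E) : Prop :=
  ∃ C : ℝ, ∀ x y : Omega 𝒜, ‖a x - a y‖ ≤ C * (dOmega x y) ^ α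

/-- The Hölder constant `Hol_α(a) = sup_{x≠y} ‖a x - a y‖ / d(x,y)^α`. -/
noncomputable def HolConst (α : ℝ) {E : Type*} [NormedAddCommGroup E] (a : Omega 𝒜 → E) : ℝ :=
  sSup {r : ℝ | ∃ x y : Omega 𝒜, x ≠ y ∧ r = ‖a x - a y‖ / (dOmega x y) ^ α}

/-- `J` is a `g`-function: continuous, strictly positive, with `∑_{q∈𝒜} J(qx) = 1`. -/
def IsGFunction [Fintype 𝒜] [TopologicalSpace 𝒜] (J : Omega 𝒜 → ℝ) : Prop :=
  Continuous J ∧ (∀ x, 0 < J x) ∧ ∀ x : Omega 𝒜, ∑ q : 𝒜, J (cons q x) = 1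

/-- The Ruelle transfer operator `(L_f φ)(x) = ∑_{q∈𝒜} e^{f(qx)} φ(qx)`. -/
noncomputable def ruelle [Fintype 𝒜] {E : Type*} [AddCommMonoid E] [Module ℝ E]
    (f : Omega 𝒜 → ℝ) (φ : Omega 𝒜 → E) : Omega 𝒜 → E :=
  fun x => ∑ q : 𝒜, Real.exp (f (cons q x)) • φ (cons q x)

/-- Birkhoff sum `S_k(f) = ∑_{j=0}^{k-1} f ∘ σ^j`. -/
def birkhoff (f : Omega 𝒜 → ℝ) (k : ℕ) (x : Omega 𝒜) : ℝ :=
  ∑ j ∈ Finset.range k, f (shift^[j] x)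

/-- `𝕁(wx) = exp (S_k(log J)(wx))` for a word `w` of length `k`. -/
noncomputable def JBirk (J : Omega 𝒜 → ℝ) (k : ℕ) (w : Fin k → 𝒜) (x : Omega 𝒜) : ℝ :=
  Real.exp (birkhoff (fun z => Real.log (J z)) k (concat w x))

/-- `ζ₊(s) = ∑_{k≥1} ∑_{w∈𝒜^k} a(wx) 𝕁(wx)^s`. -/
noncomputable def zetaPlus [Fintype 𝒜] (J : Omega 𝒜 → ℝ) (a : Omega 𝒜 → ℂ) (x : Omega 𝒜)
    (s : ℝ) : ℂ :=
  ∑' k : ℕ, ∑ w : Fin (k + 1) → 𝒜, a (concat w x) * (((JBirk J (k + 1) w x) ^ s : ℝ) : ℂ)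

/-- `ζ₋(s) = ∑_{k≥1} ∑_{w∈𝒜^k} a(wy) 𝕁(wx)^s`. -/
noncomputable def zetaMinus [Fintype 𝒜] (J : Omega 𝒜 → ℝ) (a : Omega 𝒜 → ℂ) (x y : Omega 𝒜)
    (s : ℝ) : ℂ :=
  ∑' k : ℕ, ∑ w : Fin (k + 1) → 𝒜, a (concat w y) * (((JBirk J (k + 1) w x) ^ s : ℝ) : ℂ)

/-- `L_{log J}^* μ = μ`, i.e. `μ` is a `g`-measure of `J`, tested against continuous functions. -/
def IsGMeasure [Fintype 𝒜] [TopologicalSpace 𝒜] [MeasurableSpace 𝒜]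
    (J : Omega 𝒜 → ℝ) (μ : Measure (Omega 𝒜)) : Prop :=
  IsProbabilityMeasure μ ∧
    ∀ φ : Omega 𝒜 → ℂ, Continuous φ →
      ∫ x, ruelle (fun z => Real.log (J z)) φ x ∂μ = ∫ x, φ x ∂μ

/-- The cylinder set determined by a finite word. -/
def cyl {k : ℕ} (w : Fin k → 𝒜) : Set (Omega 𝒜) := {x | ∀ i : Fin k, x (i : ℕ) = w i}

/-- Entropy of the partition into cylinders of length `n`. -/
noncomputable def blockEntropy [Fintype 𝒜] [MeasurableSpace 𝒜] (μ : Measure (Omega 𝒜))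
    (n : ℕ) : ℝ :=
  ∑ w : Fin n → 𝒜, Real.negMulLog (μ (cyl w)).toReal

/-- Kolmogorov–Sinai entropy `h_μ(σ)` of a shift-invariant measure, computed through the
generating partition into cylinders: `h_μ(σ) = lim_n H_n/n = inf_{n≥1} H_n/n`. -/
noncomputable def KSentropy [Fintype 𝒜] [MeasurableSpace 𝒜] (μ : Measure (Omega 𝒜)) : ℝ :=
  ⨅ n : ℕ, blockEntropy μ (n + 1) / (n + 1)

/-- Topological pressure `P(f) = sup {h_μ(σ) + ∫ f dμ}` over shift-invariant Borel
probability measures. -/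
noncomputable def pressure [Fintype 𝒜] [MeasurableSpace 𝒜] (f : Omega 𝒜 → ℝ) : ℝ :=
  sSup {r : ℝ | ∃ μ : Measure (Omega 𝒜), IsProbabilityMeasure μ ∧
    Measure.map shift μ = μ ∧ r = KSentropy μ + ∫ x, f x ∂μ}

/-- `μ` is an equilibrium state of `f`. -/
def IsEquilibrium [Fintype 𝒜] [MeasurableSpace 𝒜] (f : Omega 𝒜 → ℝ)
    (μ : Measure (Omega 𝒜)) : Prop :=
  IsProbabilityMeasure μ ∧ Measure.map shift μ = μ ∧
    KSentropy μ + ∫ x, f x ∂μ = pressure f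

/-- The Walters class `W(Ω,σ)`:
`sup_{n≥1} sup_{w∈𝒜^n} |S_n(f)(wx) − S_n(f)(wy)| → 0` as `d(x,y) → 0`. -/
def WaltersClass [TopologicalSpace 𝒜] (f : Omega 𝒜 → ℝ) : Prop :=
  Continuous f ∧ ∀ ε > (0:ℝ), ∃ δ > (0:ℝ), ∀ x y : Omega 𝒜, dOmega x y < δ →
    ∀ (n : ℕ) (w : Fin n → 𝒜),
      |birkhoff f n (concat w x) - birkhoff f n (concat w y)| ≤ ε

/-- The set `W*` of finite (nonempty) words over `𝒜`. -/
def Words (𝒜 : Type) : Type := Σ k : ℕ, Fin (k + 1) → 𝒜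

end GS
namespace GS

/-- The spin values: symbol `0` ↦ `−1`, symbol `1` ↦ `+1`. -/
noncomputable def spin (q : Fin 2) : ℝ := if q = 0 then -1 else 1

/-- The Dyson potential `f(x) = x₁ ∑_{n≥2} x_n/(n−1)^α` on `Ω = {−1,1}^ℕ`
(spins encoded by `Fin 2` through `spin`, and the series reindexed from `0`). -/
noncomputable def dyson (α : ℝ) (x : Omega (Fin 2)) : ℝ :=
  spin (x 0) * ∑' n : ℕ, spin (x (n + 1)) / ((n : ℝ) + 1) ^ α

section Walters

variable {𝒜 : Type}

theorem eq_of_dOmega_lt {x y : Omega 𝒜} {N : ℕ} (h : dOmega x y < (1 / 2 : ℝ) ^ (N + 1))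
    {m : ℕ} (hm : m < N) : x m = y m := by
  by_cases hxy : x = y
  · rw [hxy]
  rw [dOmega, if_neg hxy, pow_lt_pow_iff_right_of_lt_one₀ (by norm_num) (by norm_num)] at h
  by_contra hne
  exact Nat.notMem_of_lt_sInf (s := {k | x k ≠ y k}) (by omega) hne

theorem shift_iterate_apply (x : Omega 𝒜) (j m : ℕ) : (shift^[j] x) m = x (m + j) := by
  induction j generalizing x with
  | zero => rfl
  | succ j ih => rw [Function.iterate_succ_apply, ih]; rfl

theorem shift_iterate_concat_apply_eq {N n : ℕ} {x y : Omega 𝒜} (hxy : ∀ m < N, x m = y m)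
    (w : Fin n → 𝒜) {j m : ℕ} (hm : m + j < n + N) :
    (shift^[j] (concat w x)) m = (shift^[j] (concat w y)) m := by
  rw [shift_iterate_apply, shift_iterate_apply, concat, concat]
  split_ifs
  · rfl
  · exact hxy _ (by omega)

variable {f : Omega 𝒜 → ℝ} {v : ℕ → ℝ}

theorem abs_birkhoff_concat_sub_le
    (hvar : ∀ M z z', (∀ m ≤ M, z m = z' m) → |f z - f z'| ≤ v M)
    {N : ℕ} {x y : Omega 𝒜} (hxy : ∀ m < N, x m = y m) (n : ℕ) (w : Fin n → 𝒜) :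
    |birkhoff f n (concat w x) - birkhoff f n (concat w y)| ≤ ∑ i ∈ Finset.range n, v (i + N) := by
  rw [← Finset.sum_range_reflect, birkhoff, birkhoff, ← Finset.sum_sub_distrib]
  refine (Finset.abs_sum_le_sum_abs _ _).trans (Finset.sum_le_sum fun j hj => hvar _ _ _ ?_)
  intro m hm
  exact shift_iterate_concat_apply_eq hxy w (by simp only [Finset.mem_range] at hj; omega)

theorem waltersClass_of_summable_variation [TopologicalSpace 𝒜] (hf : Continuous f)
    (hv0 : 0 ≤ v) (hv : Summable v)
    (hvar : ∀ M z z', (∀ m ≤ M, z m = z' m) → |f z - f z'| ≤ v M) :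
    WaltersClass f := by
  refine ⟨hf, fun ε hε => ?_⟩
  obtain ⟨N, hN⟩ := ((tendsto_sum_nat_add v).eventually (gt_mem_nhds hε)).exists
  refine ⟨(1 / 2 : ℝ) ^ (N + 1), by positivity, fun x y hd n w => ?_⟩
  calc |birkhoff f n (concat w x) - birkhoff f n (concat w y)|
      ≤ ∑ i ∈ Finset.range n, v (i + N) :=
        abs_birkhoff_concat_sub_le hvar (fun m hm => eq_of_dOmega_lt hd hm) n w
    _ ≤ ∑' i, v (i + N) :=
        ((summable_nat_add_iff N).mpr hv).sum_le_tsum _ fun i _ => hv0 (i + N)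
    _ ≤ ε := hN.le

end Walters

section Dyson

variable {α : ℝ}

noncomputable def dysonWeight (α : ℝ) (n : ℕ) : ℝ := 1 / ((n : ℝ) + 1) ^ α

noncomputable def dysonTail (α : ℝ) (M : ℕ) : ℝ := ∑' k, dysonWeight α (k + M)

theorem dysonWeight_nonneg (α : ℝ) (n : ℕ) : 0 ≤ dysonWeight α n := by
  unfold dysonWeight; positivity

theorem dysonTail_nonneg (α : ℝ) (M : ℕ) : 0 ≤ dysonTail α M :=
  tsum_nonneg fun k => dysonWeight_nonneg α (k + M)

theorem summable_dysonWeight (hα : 1 < α) : Summable (dysonWeight α) := by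
  have h := (summable_nat_add_iff 1).mpr (Real.summable_one_div_nat_rpow.mpr hα)
  exact h.congr fun n => by rw [dysonWeight, Nat.cast_add_one]

theorem dysonWeight_add_le (hα : 0 ≤ α) (k M : ℕ) :
    dysonWeight α (k + M) ≤ dysonWeight (α / 2) k * dysonWeight (α / 2) M := by
  have hk : ((k : ℝ) + 1) ^ (α / 2) ≤ ((↑(k + M) : ℝ) + 1) ^ (α / 2) :=
    Real.rpow_le_rpow (by positivity) (by push_cast; linarith [(M.cast_nonneg : (0 : ℝ) ≤ M)])
      (by linarith)
  have hM : ((M : ℝ) + 1) ^ (α / 2) ≤ ((↑(k + M) : ℝ) + 1) ^ (α / 2) :=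
    Real.rpow_le_rpow (by positivity) (by push_cast; linarith [(k.cast_nonneg : (0 : ℝ) ≤ k)])
      (by linarith)
  have hsplit : ((↑(k + M) : ℝ) + 1) ^ α =
      ((↑(k + M) : ℝ) + 1) ^ (α / 2) * ((↑(k + M) : ℝ) + 1) ^ (α / 2) := by
    rw [← Real.rpow_add (by positivity), add_halves]
  rw [dysonWeight, dysonWeight, dysonWeight, div_mul_div_comm, one_mul, hsplit]
  gcongr

theorem summable_dysonTail (hα : 2 < α) : Summable (dysonTail α) := by
  have hw : Summable (dysonWeight (α / 2)) := summable_dysonWeight (by linarith)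
  refine Summable.of_nonneg_of_le (dysonTail_nonneg α) (fun M => ?_)
    (hw.mul_left (∑' k, dysonWeight (α / 2) k))
  calc dysonTail α M ≤ ∑' k, dysonWeight (α / 2) k * dysonWeight (α / 2) M :=
        Summable.tsum_le_tsum (fun k => dysonWeight_add_le (by linarith) k M)
          ((summable_nat_add_iff M).mpr (summable_dysonWeight (by linarith))) (hw.mul_right _)
    _ = (∑' k, dysonWeight (α / 2) k) * dysonWeight (α / 2) M := tsum_mul_right

theorem abs_spin (q : Fin 2) : |spin q| = 1 := by
  unfold spin; split_ifs <;> norm_num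

theorem abs_spin_div_rpow (α : ℝ) (q : Fin 2) (n : ℕ) :
    |spin q / ((n : ℝ) + 1) ^ α| = dysonWeight α n := by
  rw [abs_div, abs_spin, abs_of_pos (by positivity), dysonWeight]

theorem summable_dysonTerm (hα : 1 < α) (x : Omega (Fin 2)) :
    Summable fun n : ℕ => spin (x (n + 1)) / ((n : ℝ) + 1) ^ α :=
  Summable.of_abs <| by simpa only [abs_spin_div_rpow] using summable_dysonWeight hα

theorem continuous_dyson (hα : 1 < α) : Continuous (dyson α) := by
  have hspin (m : ℕ) : Continuous fun x : Omega (Fin 2) => spin (x m) :=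
    (continuous_of_discreteTopology (f := spin)).comp (continuous_apply m)
  refine (hspin 0).mul (continuous_tsum (fun n => (hspin (n + 1)).div_const _)
    (summable_dysonWeight hα) fun n x => ?_)
  rw [Real.norm_eq_abs, abs_spin_div_rpow]

theorem abs_dyson_sub_le (hα : 1 < α) {M : ℕ} {z z' : Omega (Fin 2)}
    (h : ∀ m ≤ M, z m = z' m) : |dyson α z - dyson α z'| ≤ 2 * dysonTail α M := by
  set d : ℕ → ℝ := fun k =>
    spin (z (k + 1)) / ((k : ℝ) + 1) ^ α - spin (z' (k + 1)) / ((k : ℝ) + 1) ^ α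
  have hd : Summable d := (summable_dysonTerm hα z).sub (summable_dysonTerm hα z')
  have hhead : ∑ k ∈ Finset.range M, d k = 0 :=
    Finset.sum_eq_zero fun k hk => by
      simp only [d, h (k + 1) (by simp only [Finset.mem_range] at hk; omega), sub_self]
  have htail_eq : ∑' k, d (k + M) = ∑' k, d k := by
    rw [← hd.sum_add_tsum_nat_add M, hhead, zero_add]
  have hdiff : dyson α z - dyson α z' = spin (z 0) * ∑' k, d (k + M) := by
    rw [htail_eq, Summable.tsum_sub (summable_dysonTerm hα z) (summable_dysonTerm hα z'), mul_sub,
      dyson, dyson, h 0 M.zero_le]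
  have hbound (k : ℕ) : ‖d (k + M)‖ ≤ 2 * dysonWeight α (k + M) := by
    rw [Real.norm_eq_abs, two_mul]
    calc |d (k + M)| ≤ _ := abs_sub _ _
      _ = _ := by rw [abs_spin_div_rpow, abs_spin_div_rpow]
  have htail : HasSum (fun k => 2 * dysonWeight α (k + M)) (2 * dysonTail α M) :=
    ((summable_nat_add_iff M).mpr (summable_dysonWeight hα)).hasSum.mul_left 2
  rw [hdiff, abs_mul, abs_spin, one_mul]
  exact tsum_of_norm_bounded htail hbound

end Dyson

/-- the Dyson potential is in the Walters class, from [CL17].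
For `α > 2`, the series defining the Dyson potential converges absolutely at every `x ∈ Ω`,
and `f` is continuous and belongs to the Walters class `W(Ω,σ)`. -/
theorem statement19 (α : ℝ) (hα : 2 < α) :
    (∀ x : Omega (Fin 2),
      Summable (fun n : ℕ => |spin (x (n + 1)) / ((n : ℝ) + 1) ^ α|)) ∧
    Continuous (dyson α) ∧
    WaltersClass (dyson α) := by
  have hα1 : 1 < α := by linarith
  have hcont : Continuous (dyson α) := continuous_dyson hα1
  refine ⟨fun x => ?_, hcont, ?_⟩
  · simpa only [abs_spin_div_rpow] using summable_dysonWeight hα1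
  · exact waltersClass_of_summable_variation hcont
      (fun M => mul_nonneg zero_le_two (dysonTail_nonneg α M))
      ((summable_dysonTail hα).mul_left 2) fun _ _ _ h => abs_dyson_sub_le hα1 h

end GS
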